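/- arXiv:2008.13779 — 2 statements merged into one kernel-verified Lean document; each statement's English description precedes it below -/
import Mathlib

section
/- Let T be a compact, self-adjoint, nonnegative operator on a real Hilbert space with eigenvalues λ_1 ≥ λ_2 ≥ … ≥ 0 and orthonormal eigenvectors ψ_k, where λ_1 has multiplicity m (λ_1 = ⋯ = λ_m > λ_{m+1}). If the initial vector d^(1) (unit norm) satisfies ⟨d^(1), ψ_k⟩ ≠ 0 for some k ∈ {1,…,m}, then the power-iteration gains γ^(i) = ‖T d^(i)‖ converge to λ_1 as i → ∞. -/
/-!
The iterate `d (n + 1)` is the normalisation of `Tⁿ (d 1)`, so `γ (n + 1)` is the ratio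
`‖Tⁿ⁺¹ (d 1)‖ / ‖Tⁿ (d 1)‖`. By the spectral representation, with `c k = ⟪d 1, ψ k⟫`,
`‖Tⁿ (d 1)‖² / λ₁²ⁿ = ∑ₖ ((λₖ / λ₁)ⁿ cₖ)²`, which tends by dominated convergence to
`∑_{k < m} cₖ² > 0`; hence consecutive ratios tend to `λ₁`.
-/

open scoped RealInnerProductSpace
open Filter Topology NormedSpace Finset

theorem NormedSpace.normalize_map_normalize {E F 𝓕 : Type*} [NormedAddCommGroup E]
    [NormedSpace ℝ E] [NormedAddCommGroup F] [NormedSpace ℝ F] [FunLike 𝓕 E F]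
    [LinearMapClass 𝓕 ℝ E F]
    (T : 𝓕) (w : E) : normalize (T (normalize w)) = normalize (T w) := by
  rcases eq_or_ne w 0 with rfl | hw
  · simp
  · change normalize (T (‖w‖⁻¹ • w)) = _
    rw [map_smul, normalize_smul_of_pos (inv_pos.2 (norm_pos_iff.2 hw))]

theorem eq_normalize_pow_apply_of_eq_normalize_apply {E : Type*} [NormedAddCommGroup E]
    [NormedSpace ℝ E] {T : E →L[ℝ] E} {d : ℕ → E}
    (hstep : ∀ i ≥ 1, d (i + 1) = normalize (T (d i))) {n : ℕ} (hn : 1 ≤ n) :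
    d (n + 1) = normalize ((T ^ n) (d 1)) := by
  induction n, hn using Nat.le_induction with
  | base => rw [hstep 1 le_rfl, pow_one]
  | succ n hn ih =>
    rw [hstep (n + 1) (by omega), ih, normalize_map_normalize, pow_succ',
      mul_apply_eq_comp]

theorem tendsto_tsum_sq_pow_mul {μ c : ℕ → ℝ} {m : ℕ} (hc : Summable fun k => c k ^ 2)
    (hdom : ∀ k < m, μ k = 1) (hsub : ∀ k ≥ m, |μ k| < 1) :
    Tendsto (fun n => ∑' k, (μ k ^ n * c k) ^ 2) atTop (𝓝 (∑ k ∈ range m, c k ^ 2)) := by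
  have hμ : ∀ k, |μ k| ≤ 1 := fun k => by
    rcases lt_or_ge k m with hk | hk
    · simp [hdom k hk]
    · exact (hsub k hk).le
  have hlim : ∀ k, Tendsto (fun n => (μ k ^ n * c k) ^ 2) atTop
      (𝓝 (if k < m then c k ^ 2 else 0)) := fun k => by
    split_ifs with hk
    · simp [hdom k hk]
    · simpa using ((tendsto_pow_atTop_nhds_zero_of_abs_lt_one (hsub k (not_lt.1 hk))).mul_const
        (c k)).pow 2
  have hbound : ∀ n k, ‖(μ k ^ n * c k) ^ 2‖ ≤ c k ^ 2 := fun n k => by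
    rw [Real.norm_eq_abs, abs_pow, abs_mul, abs_pow, mul_pow, ← sq_abs (c k)]
    exact mul_le_of_le_one_left (sq_nonneg _) (pow_le_one₀ (by positivity)
      (pow_le_one₀ (abs_nonneg _) (hμ k)))
  have := tendsto_tsum_of_dominated_convergence hc hlim (Eventually.of_forall hbound)
  rwa [tsum_eq_sum (s := range m) (fun k hk => if_neg (by simpa using hk)),
    sum_congr rfl (fun k hk => if_pos (mem_range.1 hk))] at this

section SpectralRepresentation

variable {H : Type*} [NormedAddCommGroup H] [InnerProductSpace ℝ H] {T : H →L[ℝ] H}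
  {ψ : ℕ → H} {lam : ℕ → ℝ}

theorem inner_apply_eq_of_hasSum_eigen (horth : Orthonormal ℝ ψ)
    (hspec : ∀ x, HasSum (fun k => (lam k * ⟪x, ψ k⟫) • ψ k) (T x)) (x : H) (j : ℕ) :
    ⟪T x, ψ j⟫ = lam j * ⟪x, ψ j⟫ := by
  have h := (hspec x).mapL (innerSL ℝ (ψ j))
  simp only [innerSL_apply_apply, real_inner_smul_right] at h
  have hsingle : ∀ k ≠ j, lam k * ⟪x, ψ k⟫ * ⟪ψ j, ψ k⟫ = 0 := fun k hk => by
    simp [horth.inner_eq_zero hk.symm]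
  rw [real_inner_comm, h.unique (hasSum_single j hsingle),
    real_inner_self_eq_norm_sq, horth.norm_eq_one, one_pow, mul_one]

theorem inner_pow_apply_eq_of_hasSum_eigen (horth : Orthonormal ℝ ψ)
    (hspec : ∀ x, HasSum (fun k => (lam k * ⟪x, ψ k⟫) • ψ k) (T x)) (x : H) (j n : ℕ) :
    ⟪(T ^ n) x, ψ j⟫ = lam j ^ n * ⟪x, ψ j⟫ := by
  induction n with
  | zero => simp
  | succ n ih =>
    rw [pow_succ', mul_apply_eq_comp, inner_apply_eq_of_hasSum_eigen horth hspec, ih,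
      pow_succ, mul_assoc, mul_left_comm]

theorem hasSum_sq_norm_apply_of_hasSum_eigen (horth : Orthonormal ℝ ψ)
    (hspec : ∀ x, HasSum (fun k => (lam k * ⟪x, ψ k⟫) • ψ k) (T x)) (x : H) :
    HasSum (fun k => (lam k * ⟪x, ψ k⟫) ^ 2) (‖T x‖ ^ 2) := by
  have h := (hspec x).mapL (innerSL ℝ (T x))
  simp only [innerSL_apply_apply, real_inner_smul_right,
    inner_apply_eq_of_hasSum_eigen horth hspec, real_inner_self_eq_norm_sq] at h
  simpa only [sq] using h

theorem hasSum_sq_norm_pow_succ_apply_of_hasSum_eigen (horth : Orthonormal ℝ ψ)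
    (hspec : ∀ x, HasSum (fun k => (lam k * ⟪x, ψ k⟫) • ψ k) (T x)) (x : H) (n : ℕ) :
    HasSum (fun k => (lam k ^ (n + 1) * ⟪x, ψ k⟫) ^ 2) (‖(T ^ (n + 1)) x‖ ^ 2) := by
  have h := hasSum_sq_norm_apply_of_hasSum_eigen horth hspec ((T ^ n) x)
  simp only [inner_pow_apply_eq_of_hasSum_eigen horth hspec, ← mul_assoc, ← pow_succ'] at h
  rwa [← mul_apply_eq_comp, ← pow_succ'] at h

theorem tendsto_norm_pow_succ_apply_div_pow_of_hasSum_eigen (horth : Orthonormal ℝ ψ)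
    (hspec : ∀ x, HasSum (fun k => (lam k * ⟪x, ψ k⟫) • ψ k) (T x)) {a : ℝ} {m : ℕ}
    (hdom : ∀ k < m, lam k = a) (hsub : ∀ k ≥ m, |lam k| < a) (x : H) :
    Tendsto (fun n => ‖(T ^ (n + 1)) x‖ / a ^ (n + 1)) atTop
      (𝓝 √(∑ k ∈ range m, ⟪x, ψ k⟫ ^ 2)) := by
  have ha : 0 < a := (abs_nonneg _).trans_lt (hsub m le_rfl)
  have hsq : ∀ n, ∑' k, ((lam k / a) ^ (n + 1) * ⟪x, ψ k⟫) ^ 2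
      = (‖(T ^ (n + 1)) x‖ / a ^ (n + 1)) ^ 2 := fun n => by
    rw [div_pow, ← ((hasSum_sq_norm_pow_succ_apply_of_hasSum_eigen horth hspec x n).div_const
      ((a ^ (n + 1)) ^ 2)).tsum_eq]
    exact tsum_congr fun k => by rw [div_pow]; field_simp
  have hc : Summable fun k => ⟪x, ψ k⟫ ^ 2 := by
    simpa only [Real.norm_eq_abs, sq_abs, real_inner_comm] using horth.inner_products_summable x
  have hlim := tendsto_tsum_sq_pow_mul (μ := fun k => lam k / a) hc
    (fun k hk => by simp [hdom k hk, ha.ne']) (fun k hk => by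
      rw [abs_div, abs_of_pos ha, div_lt_one ha]; exact hsub k hk)
  refine ((hlim.comp (tendsto_add_atTop_nat 1)).sqrt).congr fun n => ?_
  simp only [Function.comp_apply, hsq]
  exact Real.sqrt_sq (by positivity)

end SpectralRepresentation

/-- Eigenvalues are indexed from `0`, so `lam 0` is λ₁; the initial vector is `d 1`. -/
theorem power_iteration_gain_tendsto_general
    {H : Type*} [NormedAddCommGroup H] [InnerProductSpace ℝ H]
    (T : H →L[ℝ] H)
    (ψ : ℕ → H) (lam : ℕ → ℝ)
    (horth : Orthonormal ℝ ψ)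
    (hlam_nonneg : ∀ k, 0 ≤ lam k)
    (hlam_sorted : ∀ k, lam (k + 1) ≤ lam k)
    (hspec : ∀ d : H, HasSum (fun k => (lam k * ⟪d, ψ k⟫) • ψ k) (T d))
    (m : ℕ)
    (hmult : ∀ k < m, lam k = lam 0)
    (hgap : lam m < lam 0)
    (d : ℕ → H) (γ : ℕ → ℝ)
    (hinit : ∃ k < m, ⟪d 1, ψ k⟫ ≠ 0)
    (hγ : ∀ i ≥ 1, γ i = ‖T (d i)‖)
    (hrec : ∀ i ≥ 1, d (i + 1) = (γ i)⁻¹ • T (d i)) :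
    Tendsto γ atTop (nhds (lam 0)) := by
  set a := lam 0
  have ha : 0 < a := (hlam_nonneg m).trans_lt hgap
  have hsub : ∀ k ≥ m, |lam k| < a := fun k hk => by
    rw [abs_of_nonneg (hlam_nonneg k)]
    exact (antitone_nat_of_succ_le hlam_sorted hk).trans_lt hgap
  set S := ∑ k ∈ range m, ⟪d 1, ψ k⟫ ^ 2
  have hS : 0 < √S := by
    obtain ⟨k, hk, hck⟩ := hinit
    exact Real.sqrt_pos.2 (sum_pos' (fun i _ => sq_nonneg _) ⟨k, mem_range.2 hk, by positivity⟩)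
  set g := fun n => ‖(T ^ (n + 1)) (d 1)‖ / a ^ (n + 1)
  have hg : Tendsto g atTop (𝓝 √S) :=
    tendsto_norm_pow_succ_apply_div_pow_of_hasSum_eigen horth hspec hmult hsub (d 1)
  have hgain : ∀ n, γ (n + 2) = a * (g (n + 1) / g n) := fun n => by
    have hd : d (n + 2) = normalize ((T ^ (n + 1)) (d 1)) :=
      eq_normalize_pow_apply_of_eq_normalize_apply
        (fun i hi => by rw [hrec i hi, hγ i hi]; rfl) (Nat.le_add_left 1 n)
    rw [hγ _ (by omega), hd, NormedSpace.normalize, map_smul, norm_smul, ← mul_apply_eq_comp,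
      ← pow_succ']
    simp only [g, norm_inv, norm_norm]
    field_simp
    ring
  have hlim := ((hg.comp (tendsto_add_atTop_nat 1)).div hg hS.ne').const_mul a
  rw [div_self hS.ne', mul_one] at hlim
  exact (tendsto_add_atTop_iff_nat 2).1 (hlim.congr fun n => (hgain n).symm)

/-- the power-iteration gains converge to the dominant eigenvalue
`λ₁ = lam 0` (of multiplicity `m`) provided the initial vector is not orthogonal
to the dominant eigenspace. Eigenvalues are indexed from `0`, so `lam 0` is λ₁
and `lam k = lam 0` for `k < m`. -/
theorem power_iteration_gain_tendsto
    {H : Type*} [NormedAddCommGroup H] [InnerProductSpace ℝ H] [CompleteSpace H]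
    (T : H →L[ℝ] H)
    (hsa : IsSelfAdjoint T)
    (hnn : ∀ x : H, 0 ≤ ⟪T x, x⟫)
    (hcomp : IsCompactOperator T)
    (ψ : ℕ → H) (lam : ℕ → ℝ)
    (horth : Orthonormal ℝ ψ)
    (hlam_nonneg : ∀ k, 0 ≤ lam k)
    (hlam_sorted : ∀ k, lam (k + 1) ≤ lam k)
    (hspec : ∀ d : H, HasSum (fun k => (lam k * ⟪d, ψ k⟫) • ψ k) (T d))
    (m : ℕ) (hm : 0 < m)
    (hmult : ∀ k < m, lam k = lam 0)
    (hgap : lam m < lam 0)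
    (d : ℕ → H) (γ : ℕ → ℝ)
    (hd1 : ‖d 1‖ = 1)
    (hinit : ∃ k < m, ⟪d 1, ψ k⟫ ≠ 0)
    (hγ : ∀ i ≥ 1, γ i = ‖T (d i)‖)
    (hγne : ∀ i ≥ 1, γ i ≠ 0)
    (hrec : ∀ i ≥ 1, d (i + 1) = (γ i)⁻¹ • T (d i)) :
    Tendsto γ atTop (nhds (lam 0)) :=
  power_iteration_gain_tendsto_general T ψ lam horth hlam_nonneg hlam_sorted hspec m hmult hgap d γ
    hinit hγ hrec
end

section
/- Under the same hypotheses (compact self-adjoint nonnegative T with dominant eigenvalue λ_1 of multiplicity m, and ⟨d^(1), ψ_k⟩ ≠ 0 for some k ≤ m), the distance from the power iterates d^(i) to the span of {ψ_1,…,ψ_m} converges to 0 as i → ∞. -/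
open scoped RealInnerProductSpace
open Filter

/-!
The iterate `d (n + 1)` is a multiple `β • Tⁿ (d 1)`, whose `k`-th coefficient is
`β λₖⁿ ⟨d 1, ψₖ⟩`. Its squared distance to the dominant span is at most the tail sum over
`k ≥ m`, hence at most `β² λₘ²ⁿ`. On the other hand the coefficient at a dominant index `k₀`
with `⟨d 1, ψₖ₀⟩ ≠ 0` is at most `1` in absolute value, as `d (n + 1)` is a unit vector, so
`β² λ₁²ⁿ ⟨d 1, ψₖ₀⟩² ≤ 1`. The distance therefore decays like `(λₘ / λ₁)ⁿ`.
-/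

namespace Orthonormal

variable {H ι : Type*} [NormedAddCommGroup H] [InnerProductSpace ℝ H] {v : ι → H}

theorem inner_eq_of_hasSum (hv : Orthonormal ℝ v) {b : ι → ℝ} {x : H}
    (h : HasSum (fun i => b i • v i) x) (j : ι) : ⟪x, v j⟫ = b j := by
  classical
  have hj : HasSum (fun i => ⟪v j, b i • v i⟫) ⟪v j, x⟫ := h.mapL (innerSL ℝ (v j))
  have hterm : (fun i => ⟪v j, b i • v i⟫) = fun i => if i = j then b j else 0 := by
    ext i
    rw [real_inner_smul_right, orthonormal_iff_ite.mp hv j i]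
    by_cases hij : i = j
    · simp [hij]
    · simp [hij, Ne.symm hij]
  rw [real_inner_comm]
  exact hj.unique (hterm ▸ hasSum_ite_eq j (b j))

theorem hasSum_sq_of_hasSum (hv : Orthonormal ℝ v) {b : ι → ℝ} {x : H}
    (h : HasSum (fun i => b i • v i) x) : HasSum (fun i => b i ^ 2) (‖x‖ ^ 2) := by
  have hx : HasSum (fun i => ⟪x, b i • v i⟫) ⟪x, x⟫ := h.mapL (innerSL ℝ x)
  simpa only [real_inner_smul_right, hv.inner_eq_of_hasSum h, ← sq, real_inner_self_eq_norm_sq]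
    using hx

theorem summable_inner_sq (hv : Orthonormal ℝ v) (x : H) : Summable fun i => ⟪x, v i⟫ ^ 2 := by
  simpa only [Real.norm_eq_abs, sq_abs, real_inner_comm] using hv.inner_products_summable (x := x)

theorem tsum_inner_sq_le (hv : Orthonormal ℝ v) (x : H) : ∑' i, ⟪x, v i⟫ ^ 2 ≤ ‖x‖ ^ 2 := by
  simpa only [Real.norm_eq_abs, sq_abs, real_inner_comm] using hv.tsum_inner_products_le (x := x)

theorem inner_sq_le_norm_sq (hv : Orthonormal ℝ v) (x : H) (i : ι) : ⟪x, v i⟫ ^ 2 ≤ ‖x‖ ^ 2 :=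
  sq_le_sq.mpr (by simpa [hv.1 i] using abs_real_inner_le_norm x (v i))

end Orthonormal

section SpectralSeries

variable {H : Type*} [NormedAddCommGroup H] [InnerProductSpace ℝ H] {ψ : ℕ → H}

theorem Orthonormal.infDist_span_sq_le (hψ : Orthonormal ℝ ψ) {x : H}
    (h : HasSum (fun k => ⟪x, ψ k⟫ • ψ k) x) (m : ℕ) :
    Metric.infDist x (Submodule.span ℝ (ψ '' {k | k < m}) : Set H) ^ 2 ≤
      ∑' k, ⟪x, ψ (k + m)⟫ ^ 2 := by
  set w := ∑ k ∈ Finset.range m, ⟪x, ψ k⟫ • ψ k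
  have hw : w ∈ Submodule.span ℝ (ψ '' {k | k < m}) :=
    Submodule.sum_mem _ fun k hk =>
      Submodule.smul_mem _ _ (Submodule.subset_span ⟨k, Finset.mem_range.mp hk, rfl⟩)
  have htail : HasSum (fun k => ⟪x, ψ (k + m)⟫ • ψ (k + m)) (x - w) :=
    (hasSum_nat_add_iff' m).mpr h
  have hψm : Orthonormal ℝ fun k => ψ (k + m) := hψ.comp _ (add_left_injective m)
  rw [(hψm.hasSum_sq_of_hasSum htail).tsum_eq, ← dist_eq_norm]
  exact pow_le_pow_left₀ Metric.infDist_nonneg (Metric.infDist_le_dist_of_mem hw) 2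

variable {T : H →L[ℝ] H} {lam : ℕ → ℝ}

theorem inner_pow_apply_of_hasSum (hψ : Orthonormal ℝ ψ)
    (hspec : ∀ x, HasSum (fun k => (lam k * ⟪x, ψ k⟫) • ψ k) (T x))
    (n : ℕ) (x : H) (k : ℕ) :
    ⟪(T ^ n) x, ψ k⟫ = lam k ^ n * ⟪x, ψ k⟫ := by
  induction n with
  | zero => simp
  | succ n ih =>
    rw [pow_succ', mul_apply_eq_comp, hψ.inner_eq_of_hasSum (hspec _) k, ih]
    ring

theorem hasSum_inner_smul_apply (hψ : Orthonormal ℝ ψ)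
    (hspec : ∀ x, HasSum (fun k => (lam k * ⟪x, ψ k⟫) • ψ k) (T x))
    (x : H) : HasSum (fun k => ⟪T x, ψ k⟫ • ψ k) (T x) := by
  simpa only [hψ.inner_eq_of_hasSum (hspec x)] using hspec x

theorem tsum_inner_pow_apply_sq_le (hψ : Orthonormal ℝ ψ)
    (hspec : ∀ x, HasSum (fun k => (lam k * ⟪x, ψ k⟫) • ψ k) (T x))
    (hlam_nonneg : ∀ k, 0 ≤ lam k) (hanti : Antitone lam) (n m : ℕ) (y : H) :
    ∑' k, ⟪(T ^ n) y, ψ (k + m)⟫ ^ 2 ≤ (lam m ^ n) ^ 2 * ‖y‖ ^ 2 := by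
  have hψm : Orthonormal ℝ fun k => ψ (k + m) := hψ.comp _ (add_left_injective m)
  calc ∑' k, ⟪(T ^ n) y, ψ (k + m)⟫ ^ 2 ≤ ∑' k, (lam m ^ n) ^ 2 * ⟪y, ψ (k + m)⟫ ^ 2 := by
        refine Summable.tsum_le_tsum (fun k => ?_) (hψm.summable_inner_sq _)
          ((hψm.summable_inner_sq y).mul_left _)
        rw [inner_pow_apply_of_hasSum hψ hspec, mul_pow]
        have hlam : 0 ≤ lam (k + m) := hlam_nonneg _
        gcongr
        exact hanti (Nat.le_add_left m k)
    _ = (lam m ^ n) ^ 2 * ∑' k, ⟪y, ψ (k + m)⟫ ^ 2 := tsum_mul_left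
    _ ≤ (lam m ^ n) ^ 2 * ‖y‖ ^ 2 := by gcongr; exact hψm.tsum_inner_sq_le y

theorem infDist_span_mul_le (hψ : Orthonormal ℝ ψ)
    (hspec : ∀ x, HasSum (fun k => (lam k * ⟪x, ψ k⟫) • ψ k) (T x))
    (hlam_nonneg : ∀ k, 0 ≤ lam k) (hanti : Antitone lam) (n m k₀ : ℕ) (y : H) (β : ℝ) :
    Metric.infDist (β • (T ^ (n + 1)) y) (Submodule.span ℝ (ψ '' {k | k < m}) : Set H) *
        (lam k₀ ^ (n + 1) * |⟪y, ψ k₀⟫|) ≤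
      lam m ^ (n + 1) * ‖y‖ * ‖β • (T ^ (n + 1)) y‖ := by
  set x := β • (T ^ (n + 1)) y
  -- the eigen-expansion converges to vectors in the range of `T`, hence the exponent `n + 1`
  have hx : x = T (β • (T ^ n) y) := by
    rw [map_smul, ← mul_apply_eq_comp, ← pow_succ']
  have hdist := hψ.infDist_span_sq_le (hx ▸ hasSum_inner_smul_apply hψ hspec _) m
  have htail : ∑' k, ⟪x, ψ (k + m)⟫ ^ 2 ≤ β ^ 2 * ((lam m ^ (n + 1)) ^ 2 * ‖y‖ ^ 2) := by
    simp only [x, real_inner_smul_left, mul_pow, tsum_mul_left]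
    gcongr
    exact tsum_inner_pow_apply_sq_le hψ hspec hlam_nonneg hanti (n + 1) m y
  have hdom : (β * (lam k₀ ^ (n + 1) * ⟪y, ψ k₀⟫)) ^ 2 ≤ ‖x‖ ^ 2 := by
    rw [← inner_pow_apply_of_hasSum hψ hspec, ← real_inner_smul_left]
    exact hψ.inner_sq_le_norm_sq x k₀
  have hlamm := hlam_nonneg m
  have hlamk := hlam_nonneg k₀
  refine (pow_le_pow_iff_left₀
    (mul_nonneg Metric.infDist_nonneg (mul_nonneg (pow_nonneg hlamk _) (abs_nonneg _)))
    (mul_nonneg (mul_nonneg (pow_nonneg hlamm _) (norm_nonneg _)) (norm_nonneg _))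
    two_ne_zero).mp ?_
  calc (Metric.infDist x _ * (lam k₀ ^ (n + 1) * |⟪y, ψ k₀⟫|)) ^ 2
      = Metric.infDist x _ ^ 2 * (lam k₀ ^ (n + 1) * ⟪y, ψ k₀⟫) ^ 2 := by
        rw [mul_pow, mul_pow, mul_pow, sq_abs]
    _ ≤ β ^ 2 * ((lam m ^ (n + 1)) ^ 2 * ‖y‖ ^ 2) * (lam k₀ ^ (n + 1) * ⟪y, ψ k₀⟫) ^ 2 := by
        gcongr
        exact hdist.trans htail
    _ = (β * (lam k₀ ^ (n + 1) * ⟪y, ψ k₀⟫)) ^ 2 * (lam m ^ (n + 1) * ‖y‖) ^ 2 := by ring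
    _ ≤ ‖x‖ ^ 2 * (lam m ^ (n + 1) * ‖y‖) ^ 2 := by gcongr
    _ = (lam m ^ (n + 1) * ‖y‖ * ‖x‖) ^ 2 := by ring

end SpectralSeries

section PowerIteration

variable {H : Type*} [NormedAddCommGroup H] [InnerProductSpace ℝ H] {T : H →L[ℝ] H} {d : ℕ → H}
  {γ : ℕ → ℝ}

theorem exists_eq_smul_pow_apply_of_rec (hrec : ∀ i ≥ 1, d (i + 1) = (γ i)⁻¹ • T (d i))
    (n : ℕ) : ∃ β : ℝ, d (n + 1) = β • (T ^ n) (d 1) := by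
  induction n with
  | zero => exact ⟨1, by simp⟩
  | succ n ih =>
    obtain ⟨β, hβ⟩ := ih
    refine ⟨(γ (n + 1))⁻¹ * β, ?_⟩
    rw [hrec (n + 1) (Nat.le_add_left 1 n), hβ, map_smul, smul_smul, pow_succ', mul_apply_eq_comp]

theorem norm_eq_one_of_rec (hγ : ∀ i ≥ 1, γ i = ‖T (d i)‖) (hγne : ∀ i ≥ 1, γ i ≠ 0)
    (hrec : ∀ i ≥ 1, d (i + 1) = (γ i)⁻¹ • T (d i)) {i : ℕ} (hi : 1 ≤ i) : ‖d (i + 1)‖ = 1 := by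
  rw [hrec i hi, norm_smul, norm_inv, Real.norm_eq_abs, hγ i hi, abs_norm,
    inv_mul_cancel₀ (hγ i hi ▸ hγne i hi)]

end PowerIteration

theorem power_iteration_iterates_tendsto_span_general
    {H : Type*} [NormedAddCommGroup H] [InnerProductSpace ℝ H]
    (T : H →L[ℝ] H)
    (ψ : ℕ → H) (lam : ℕ → ℝ)
    (horth : Orthonormal ℝ ψ)
    (hlam_nonneg : ∀ k, 0 ≤ lam k)
    (hlam_sorted : ∀ k, lam (k + 1) ≤ lam k)
    (hspec : ∀ d : H, HasSum (fun k => (lam k * ⟪d, ψ k⟫) • ψ k) (T d))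
    (m : ℕ)
    (hmult : ∀ k < m, lam k = lam 0)
    (hgap : lam m < lam 0)
    (d : ℕ → H) (γ : ℕ → ℝ)
    (hd1 : ‖d 1‖ = 1)
    (hinit : ∃ k < m, ⟪d 1, ψ k⟫ ≠ 0)
    (hγ : ∀ i ≥ 1, γ i = ‖T (d i)‖)
    (hγne : ∀ i ≥ 1, γ i ≠ 0)
    (hrec : ∀ i ≥ 1, d (i + 1) = (γ i)⁻¹ • T (d i)) :
    Tendsto (fun i => Metric.infDist (d i)
      (Submodule.span ℝ (ψ '' {k : ℕ | k < m}) : Set H)) atTop (nhds 0) := by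
  obtain ⟨k₀, hk₀, ha⟩ := hinit
  have hlam₀ : 0 < lam 0 := (hlam_nonneg m).trans_lt hgap
  have hbound : ∀ n, Metric.infDist (d (n + 2)) (Submodule.span ℝ (ψ '' {k | k < m}) : Set H) ≤
      (lam m / lam 0) ^ (n + 1) / |⟪d 1, ψ k₀⟫| := by
    intro n
    obtain ⟨β, hβ⟩ := exists_eq_smul_pow_apply_of_rec hrec (n + 1)
    have key := infDist_span_mul_le horth hspec hlam_nonneg
      (antitone_nat_of_succ_le hlam_sorted) n m k₀ (d 1) β
    rw [← hβ, hmult k₀ hk₀, hd1, norm_eq_one_of_rec hγ hγne hrec (Nat.le_add_left 1 n)] at key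
    rw [div_pow, div_div, le_div_iff₀ (by positivity)]
    simpa only [mul_one] using key
  have hratio :
      Tendsto (fun n : ℕ => (lam m / lam 0) ^ (n + 1) / |⟪d 1, ψ k₀⟫|) atTop (nhds 0) := by
    have hr := tendsto_pow_atTop_nhds_zero_of_lt_one (div_nonneg (hlam_nonneg m) hlam₀.le)
      ((div_lt_one hlam₀).mpr hgap)
    simpa using ((tendsto_add_atTop_iff_nat 1).mpr hr).div_const |⟪d 1, ψ k₀⟫|
  exact (tendsto_add_atTop_iff_nat 2).mp
    (squeeze_zero (fun _ => Metric.infDist_nonneg) hbound hratio)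

/-- the distance from the power iterates to the span of the
dominant eigenvectors converges to `0`. The dominant eigenvalue
`λ₁ = lam 0` (of multiplicity `m`) provided the initial vector is not orthogonal
to the dominant eigenspace. Eigenvalues are indexed from `0`, so `lam 0` is λ₁
and `lam k = lam 0` for `k < m`. -/
theorem power_iteration_iterates_tendsto_span
    {H : Type*} [NormedAddCommGroup H] [InnerProductSpace ℝ H] [CompleteSpace H]
    (T : H →L[ℝ] H)
    (hsa : IsSelfAdjoint T)
    (hnn : ∀ x : H, 0 ≤ ⟪T x, x⟫)
    (hcomp : IsCompactOperator T)
    (ψ : ℕ → H) (lam : ℕ → ℝ)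
    (horth : Orthonormal ℝ ψ)
    (hlam_nonneg : ∀ k, 0 ≤ lam k)
    (hlam_sorted : ∀ k, lam (k + 1) ≤ lam k)
    (hspec : ∀ d : H, HasSum (fun k => (lam k * ⟪d, ψ k⟫) • ψ k) (T d))
    (m : ℕ) (hm : 0 < m)
    (hmult : ∀ k < m, lam k = lam 0)
    (hgap : lam m < lam 0)
    (d : ℕ → H) (γ : ℕ → ℝ)
    (hd1 : ‖d 1‖ = 1)
    (hinit : ∃ k < m, ⟪d 1, ψ k⟫ ≠ 0)
    (hγ : ∀ i ≥ 1, γ i = ‖T (d i)‖)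
    (hγne : ∀ i ≥ 1, γ i ≠ 0)
    (hrec : ∀ i ≥ 1, d (i + 1) = (γ i)⁻¹ • T (d i)) :
    Tendsto (fun i => Metric.infDist (d i)
      (Submodule.span ℝ (ψ '' {k : ℕ | k < m}) : Set H)) atTop (nhds 0) :=
  power_iteration_iterates_tendsto_span_general T ψ lam horth hlam_nonneg hlam_sorted hspec m hmult
    hgap d γ hd1 hinit hγ hγne hrec
end
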